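/- arXiv:1512.07162 — 4 statements merged into one kernel-verified Lean document; each statement's English description precedes it below -/
import Mathlib

section
/- Let P and Q be equivalence relations on U. If P refines Q (P ⪯ Q), then μ_P ≤ μ_Q. -/
/-- The equivalence class of `x` under the equivalence relation (setoid) `E`. -/
def ecls {U : Type*} (E : Setoid U) (x : U) : Set U := {y | E.r x y}

/-- Classical lower approximation of `X` with respect to `E`. -/
def lowerApprox {U : Type*} (E : Setoid U) (X : Set U) : Set U :=
  {x | ecls E x ⊆ X}

/-- Classical upper approximation of `X` with respect to `E`. -/
def upperApprox {U : Type*} (E : Setoid U) (X : Set U) : Set U :=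
  {x | (ecls E x ∩ X).Nonempty}

/-- `P` refines `Q`: every `P`-class is contained in the corresponding `Q`-class. -/
def Refines {U : Type*} (P Q : Setoid U) : Prop := ∀ x : U, ecls P x ⊆ ecls Q x

/-- α-probabilistic lower approximation of `X` with respect to `E`:
`{x | |[x]_E ∩ X| ≥ α·|[x]_E|}`. -/
noncomputable def aprLow {U : Type*} (E : Setoid U) (α : ℝ) (X : Set U) : Set U :=
  {x | α * ((ecls E x).ncard : ℝ) ≤ (((ecls E x) ∩ X).ncard : ℝ)}

/-- β-probabilistic upper approximation of `X` with respect to `E`: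
`{x | |[x]_E ∩ X| > β·|[x]_E|}`. -/
noncomputable def aprUp {U : Type*} (E : Setoid U) (β : ℝ) (X : Set U) : Set U :=
  {x | β * ((ecls E x).ncard : ℝ) < (((ecls E x) ∩ X).ncard : ℝ)}

/-- `η_R = (Σ_{Y ∈ U/D} |lower_R(apr_C^α(Y))|) / (|U|·M)` where `M = |U/D|`. -/
noncomputable def eta {U : Type*} [Fintype U] (C D : Setoid U) (α : ℝ) (R : Setoid U) : ℝ :=
  haveI : Fintype (Quotient D) := Fintype.ofFinite _
  (∑ q : Quotient D,
      ((lowerApprox R (aprLow C α {x | Quotient.mk D x = q})).ncard : ℝ)) /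
    ((Fintype.card U : ℝ) * (Fintype.card (Quotient D) : ℝ))

/-- `μ_R = (Σ_{Y ∈ U/D} |upper_R(Apr_C^β(Y))|) / (|U|·M)` where `M = |U/D|`. -/
noncomputable def mu {U : Type*} [Fintype U] (C D : Setoid U) (β : ℝ) (R : Setoid U) : ℝ :=
  haveI : Fintype (Quotient D) := Fintype.ofFinite _
  (∑ q : Quotient D,
      ((upperApprox R (aprUp C β {x | Quotient.mk D x = q})).ncard : ℝ)) /
    ((Fintype.card U : ℝ) * (Fintype.card (Quotient D) : ℝ))

lemma upperApprox_mono_of_refines {U : Type*} (P Q : Setoid U) (h : Refines P Q) (X : Set U) :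
    upperApprox P X ⊆ upperApprox Q X := by
  intro x hx
  obtain ⟨y, hy1, hy2⟩ := hx
  exact ⟨y, h x hy1, hy2⟩

theorem mu_monotone_of_refines {U : Type*} [Fintype U] [Nonempty U]
    (C D : Setoid U) (β : ℝ) (hβ0 : 0 ≤ β) (hβ1 : β < 1)
    (P Q : Setoid U) (h : Refines P Q) :
    mu C D β P ≤ mu C D β Q := by
  unfold mu
  apply div_le_div_of_nonneg_right
  · apply Finset.sum_le_sum
    intro q _
    exact_mod_cast Set.ncard_le_ncard (upperApprox_mono_of_refines P Q h _) (Set.toFinite _)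
  · haveI : Nonempty (Quotient D) := ⟨Quotient.mk D (Classical.arbitrary U)⟩
    letI : Fintype (Quotient D) := Fintype.ofFinite _
    have h1 : (0:ℝ) < Fintype.card U := by exact_mod_cast Fintype.card_pos
    have h2 : (0:ℝ) < (Fintype.card (Quotient D) : ℝ) := by exact_mod_cast Fintype.card_pos
    positivity
end

section
/- Let m be a measure of granularity of sets on U, and let π and σ be partitions of U into nonempty blocks such that π refines σ (every block of π is contained in some block of σ). Then EG_m(π) ≤ EG_m(σ). -/
/-- A measure of granularity of sets on `U`: nonnegative, strictly monotone with
respect to strict inclusion, and invariant under cardinality. -/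
def IsGranularityMeasure {U : Type*} [Fintype U] (m : Set U → ℝ) : Prop :=
  (∀ X : Set U, 0 ≤ m X) ∧
  (∀ X Y : Set U, X ⊂ Y → m X < m Y) ∧
  (∀ X Y : Set U, X.ncard = Y.ncard → m X = m Y)

/-- `π` (a finite family of subsets of `U`) is a partition of `U` into nonempty blocks. -/
def IsPartition {U : Type*} (π : Finset (Set U)) : Prop :=
  (∀ X ∈ π, X.Nonempty) ∧
  (∀ X ∈ π, ∀ Y ∈ π, X ≠ Y → Disjoint X Y) ∧
  (⋃ X ∈ π, X) = Set.univ

/-- Expected granularity `EG_m(π) = Σ_{X ∈ π} m(X)·(|X|/|U|)`. -/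
noncomputable def EG {U : Type*} [Fintype U] (m : Set U → ℝ) (π : Finset (Set U)) : ℝ :=
  ∑ X ∈ π, m X * ((X.ncard : ℝ) / (Fintype.card U : ℝ))

lemma ncard_biUnion_of_disjoint {U : Type*} [Fintype U] (s : Finset (Set U))
    (hd : ∀ X ∈ s, ∀ Y ∈ s, X ≠ Y → Disjoint X Y) :
    (⋃ X ∈ s, X).ncard = ∑ X ∈ s, X.ncard := by
  classical
  induction s using Finset.induction_on with
  | empty => simp
  | @insert a t ha ih =>
    have hdt : ∀ X ∈ t, ∀ Y ∈ t, X ≠ Y → Disjoint X Y := fun X hX Y hY hne =>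
      hd X (Finset.mem_insert_of_mem hX) Y (Finset.mem_insert_of_mem hY) hne
    have hdisj : Disjoint a (⋃ X ∈ t, X) := by
      rw [Set.disjoint_iff_inter_eq_empty, Set.inter_iUnion₂]
      simp only [Set.iUnion_eq_empty]
      intro X hX
      rw [← Set.disjoint_iff_inter_eq_empty]
      exact hd a (Finset.mem_insert_self a t) X (Finset.mem_insert_of_mem hX)
        (fun h => ha (h ▸ hX))
    rw [Finset.set_biUnion_insert, Finset.sum_insert ha,
      Set.ncard_union_eq hdisj (Set.toFinite _) (Set.toFinite _), ih hdt]

theorem EG_mono_of_refines {U : Type*} [Fintype U] [Nonempty U]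
    (m : Set U → ℝ) (hm : IsGranularityMeasure m)
    (π σ : Finset (Set U)) (hπ : IsPartition π) (hσ : IsPartition σ)
    (href : ∀ X ∈ π, ∃ Y ∈ σ, X ⊆ Y) :
    EG m π ≤ EG m σ := by
  classical
  obtain ⟨hmnn, hmmono, hminv⟩ := hm
  obtain ⟨hπne, hπdisj, hπcov⟩ := hπ
  obtain ⟨hσne, hσdisj, hσcov⟩ := hσ
  have hmle : ∀ X Y : Set U, X ⊆ Y → m X ≤ m Y := by
    intro X Y h
    rcases eq_or_ne X Y with rfl | hne
    · exact le_rfl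
    · exact (hmmono X Y ⟨h, fun h' => hne (le_antisymm h h')⟩).le
  -- fibers
  set F : Set U → Finset (Set U) := fun Y => π.filter (fun X => X ⊆ Y) with hF
  have hπeq : π = σ.biUnion F := by
    ext X
    simp only [Finset.mem_biUnion, hF, Finset.mem_filter]
    constructor
    · intro hX
      obtain ⟨Y, hY, hXY⟩ := href X hX
      exact ⟨Y, hY, hX, hXY⟩
    · rintro ⟨Y, _, hX, _⟩; exact hX
  have hfibdisj : ∀ Y₁ ∈ σ, ∀ Y₂ ∈ σ, Y₁ ≠ Y₂ → Disjoint (F Y₁) (F Y₂) := by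
    intro Y₁ h1 Y₂ h2 hne
    rw [Finset.disjoint_left]
    intro X hX1 hX2
    simp only [hF, Finset.mem_filter] at hX1 hX2
    have hXne := hπne X hX1.1
    exact hXne.not_subset_empty (by
      have := Set.disjoint_iff_inter_eq_empty.mp (hσdisj Y₁ h1 Y₂ h2 hne)
      intro x hx
      have : x ∈ Y₁ ∩ Y₂ := ⟨hX1.2 hx, hX2.2 hx⟩
      rwa [Set.disjoint_iff_inter_eq_empty.mp (hσdisj Y₁ h1 Y₂ h2 hne)] at this)
  have hfibcard : ∀ Y ∈ σ, ∑ X ∈ F Y, (X.ncard : ℝ) = (Y.ncard : ℝ) := by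
    intro Y hY
    have hunion : (⋃ X ∈ F Y, X) = Y := by
      apply Set.Subset.antisymm
      · intro x hx
        simp only [Set.mem_iUnion] at hx
        obtain ⟨X, hX, hxX⟩ := hx
        simp only [hF, Finset.mem_filter] at hX
        exact hX.2 hxX
      · intro x hx
        have hxU : x ∈ (⋃ X ∈ π, X) := hπcov ▸ Set.mem_univ x
        simp only [Set.mem_iUnion] at hxU ⊢
        obtain ⟨X, hXπ, hxX⟩ := hxU
        obtain ⟨Y', hY', hXY'⟩ := href X hXπ
        have : Y = Y' := by
          by_contra hne
          exact Set.disjoint_left.mp (hσdisj Y hY Y' hY' hne) hx (hXY' hxX)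
        exact ⟨X, by simp only [hF, Finset.mem_filter]; exact ⟨hXπ, this ▸ hXY'⟩, hxX⟩
    have hd : ∀ X ∈ F Y, ∀ X' ∈ F Y, X ≠ X' → Disjoint X X' := fun X hX X' hX' hne =>
      hπdisj X (Finset.mem_filter.mp hX).1 X' (Finset.mem_filter.mp hX').1 hne
    have := ncard_biUnion_of_disjoint (F Y) hd
    rw [hunion] at this
    rw [← Nat.cast_sum, ← this]
  have key : ∀ Y ∈ σ, ∑ X ∈ F Y, m X * ((X.ncard : ℝ) / (Fintype.card U : ℝ)) ≤
      m Y * ((Y.ncard : ℝ) / (Fintype.card U : ℝ)) := by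
    intro Y hY
    have hstep : ∀ X ∈ F Y, m X * ((X.ncard : ℝ) / (Fintype.card U : ℝ)) ≤
        m Y * ((X.ncard : ℝ) / (Fintype.card U : ℝ)) := by
      intro X hX
      apply mul_le_mul_of_nonneg_right (hmle X Y (Finset.mem_filter.mp hX).2)
      positivity
    calc ∑ X ∈ F Y, m X * ((X.ncard : ℝ) / (Fintype.card U : ℝ))
        ≤ ∑ X ∈ F Y, m Y * ((X.ncard : ℝ) / (Fintype.card U : ℝ)) :=
          Finset.sum_le_sum hstep
      _ = m Y * ((∑ X ∈ F Y, (X.ncard : ℝ)) / (Fintype.card U : ℝ)) := by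
          rw [← Finset.mul_sum, Finset.sum_div]
      _ = m Y * ((Y.ncard : ℝ) / (Fintype.card U : ℝ)) := by rw [hfibcard Y hY]
  calc EG m π = ∑ Y ∈ σ, ∑ X ∈ F Y, m X * ((X.ncard : ℝ) / (Fintype.card U : ℝ)) := by
        rw [EG, hπeq, Finset.sum_biUnion hfibdisj]
    _ ≤ ∑ Y ∈ σ, m Y * ((Y.ncard : ℝ) / (Fintype.card U : ℝ)) := Finset.sum_le_sum key
    _ = EG m σ := rfl
end

section
/- Let m be a measure of granularity of sets on U. Then for every partition π of U into nonempty blocks, EG_m(Π_0) ≤ EG_m(π) ≤ EG_m(Π_1); in particular the expected granularity attains its minimum at the finest partition Π_0 and its maximum at the coarsest partition Π_1. -/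
/-- The finest partition `Π_0 = {{x} : x ∈ U}` of `U`. -/
noncomputable def finestPartition (U : Type*) [Fintype U] : Finset (Set U) :=
  haveI := Classical.decEq (Set U)
  Finset.univ.image (fun x : U => ({x} : Set U))


/-! Spreading the weight `|X|/|U|` of each block `X` evenly over its points writes `EG_m(π)` as
the average over `x ∈ U` of `m` of the block containing `x`. Since that block contains `{x}` and
is contained in `U`, monotonicity of `m` bounds each summand between `m {x}` and `m U`, which are
exactly the summands for `Π_0` and `Π_1`. -/

theorem IsGranularityMeasure.monotone {U : Type*} [Fintype U] {m : Set U → ℝ}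
    (hm : IsGranularityMeasure m) : Monotone m := fun X Y hXY =>
  hXY.eq_or_ssubset.elim (fun h => h ▸ le_rfl) fun h => (hm.2.1 X Y h).le

section Partition

open Classical

variable {U : Type*} [Fintype U] {π : Finset (Set U)}

theorem IsPartition.sum_sum_toFinset {M : Type*} [AddCommMonoid M] (hπ : IsPartition π)
    (g : U → M) : ∑ X ∈ π, ∑ x ∈ X.toFinset, g x = ∑ x, g x := by
  rw [← Finset.sum_biUnion fun X hX Y hY hXY => Set.disjoint_toFinset.2 (hπ.2.1 X hX Y hY hXY)]
  congr
  ext x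
  have hx : x ∈ ⋃ X ∈ π, X := hπ.2.2 ▸ Set.mem_univ x
  simpa using hx

theorem EG_eq_sum_sum_toFinset (m : Set U → ℝ) (π : Finset (Set U)) :
    EG m π = ∑ X ∈ π, ∑ _x ∈ X.toFinset, m X / Fintype.card U := by
  refine Finset.sum_congr rfl fun X _ => ?_
  rw [Finset.sum_const, nsmul_eq_mul, Set.ncard_eq_toFinset_card']
  ring

theorem IsPartition.sum_div_card_le_EG {m : Set U → ℝ} {g : U → ℝ} (hπ : IsPartition π)
    (hg : ∀ X ∈ π, ∀ x ∈ X, g x ≤ m X) : ∑ x, g x / Fintype.card U ≤ EG m π := by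
  rw [← hπ.sum_sum_toFinset, EG_eq_sum_sum_toFinset]
  gcongr with X hX x hx
  exact hg X hX x (Set.mem_toFinset.1 hx)

theorem IsPartition.EG_le_sum_div_card {m : Set U → ℝ} {g : U → ℝ} (hπ : IsPartition π)
    (hg : ∀ X ∈ π, ∀ x ∈ X, m X ≤ g x) : EG m π ≤ ∑ x, g x / Fintype.card U := by
  rw [← hπ.sum_sum_toFinset, EG_eq_sum_sum_toFinset]
  gcongr with X hX x hx
  exact hg X hX x (Set.mem_toFinset.1 hx)

end Partition

theorem EG_finestPartition {U : Type*} [Fintype U] (m : Set U → ℝ) :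
    EG m (finestPartition U) = ∑ x, m {x} / Fintype.card U := by
  rw [EG, finestPartition, Finset.sum_image fun _ _ _ _ h => by simpa using h]
  simp [div_eq_mul_inv]

theorem EG_singleton_univ {U : Type*} [Fintype U] (m : Set U → ℝ) :
    EG m {Set.univ} = ∑ _x : U, m Set.univ / Fintype.card U := by
  simp [EG_eq_sum_sum_toFinset]

theorem EG_between_finest_and_coarsest_general {U : Type*} [Fintype U]
    (m : Set U → ℝ) (hm : IsGranularityMeasure m)
    (π : Finset (Set U)) (hπ : IsPartition π) :
    EG m (finestPartition U) ≤ EG m π ∧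
      EG m π ≤ EG m ({Set.univ} : Finset (Set U)) := by
  rw [EG_finestPartition, EG_singleton_univ]
  exact ⟨hπ.sum_div_card_le_EG fun _ _ _ hx => hm.monotone (Set.singleton_subset_iff.2 hx),
    hπ.EG_le_sum_div_card fun X _ _ _ => hm.monotone (Set.subset_univ X)⟩

theorem EG_between_finest_and_coarsest {U : Type*} [Fintype U] [Nonempty U]
    (m : Set U → ℝ) (hm : IsGranularityMeasure m)
    (π : Finset (Set U)) (hπ : IsPartition π) :
    EG m (finestPartition U) ≤ EG m π ∧
      EG m π ≤ EG m ({Set.univ} : Finset (Set U)) :=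
  EG_between_finest_and_coarsest_general m hm π hπ
end

section
/- Let m be a measure of granularity of sets on U and let P, Q be equivalence relations on U. If P refines Q (P ⪯ Q), then Gη_P ≥ Gη_Q, where Gη_R = EG_m(Π_1) − (1 − η_R)·EG_m(U/R). -/
/-- The partition `U/R` of `U` into the equivalence classes of `R`. -/
noncomputable def partitionOf {U : Type*} [Fintype U] (R : Setoid U) : Finset (Set U) :=
  haveI := Classical.decEq (Set U)
  Finset.univ.image (fun x : U => ecls R x)

/-- `Gη_R = EG_m(Π_1) − (1 − η_R)·EG_m(U/R)`, where `Π_1 = {U}`. -/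
noncomputable def Geta {U : Type*} [Fintype U] (m : Set U → ℝ) (C D : Setoid U)
    (α : ℝ) (R : Setoid U) : ℝ :=
  EG m ({Set.univ} : Finset (Set U)) - (1 - eta C D α R) * EG m (partitionOf R)

/-- `Gμ_R = μ_R·EG_m(U/R)`. -/
noncomputable def Gmu {U : Type*} [Fintype U] (m : Set U → ℝ) (C D : Setoid U)
    (β : ℝ) (R : Setoid U) : ℝ :=
  mu C D β R * EG m (partitionOf R)

lemma ecls_eq_iff {U : Type*} (R : Setoid U) (x y : U) :
    ecls R y = ecls R x ↔ R.r x y := by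
  constructor
  · intro h
    have : y ∈ ecls R y := R.refl y
    rw [h] at this
    exact this
  · intro h
    ext z
    exact ⟨fun hz => R.trans h hz, fun hz => R.trans (R.symm h) hz⟩

lemma EG_partition_eq {U : Type*} [Fintype U] (m : Set U → ℝ) (R : Setoid U) :
    EG m (partitionOf R) = (∑ x : U, m (ecls R x)) / (Fintype.card U : ℝ) := by
  classical
  unfold EG partitionOf
  rw [Finset.sum_comp (fun X : Set U => m X) (fun x : U => ecls R x)]
  rw [Finset.sum_div]
  apply Finset.sum_congr rfl
  intro X hX
  obtain ⟨x0, _, rfl⟩ := Finset.mem_image.mp hX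
  have hcard : (Finset.univ.filter fun x => ecls R x = ecls R x0).card
      = (ecls R x0).ncard := by
    rw [Set.ncard_eq_toFinset_card']
    apply congrArg Finset.card
    ext z
    simp only [Set.mem_toFinset, Finset.mem_filter, Finset.mem_univ, true_and,
      ecls_eq_iff]
    rfl
  rw [hcard, nsmul_eq_mul]
  ring

lemma EG_nonneg {U : Type*} [Fintype U] (m : Set U → ℝ) (hm : IsGranularityMeasure m)
    (π : Finset (Set U)) : 0 ≤ EG m π := by
  apply Finset.sum_nonneg
  intro X _
  have := hm.1 X
  positivity

lemma EG_mono {U : Type*} [Fintype U] (m : Set U → ℝ) (hm : IsGranularityMeasure m)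
    (P Q : Setoid U) (h : Refines P Q) :
    EG m (partitionOf P) ≤ EG m (partitionOf Q) := by
  rw [EG_partition_eq, EG_partition_eq]
  gcongr with x _
  rcases (h x).ssubset_or_eq with hss | heq
  · exact (hm.2.1 _ _ hss).le
  · rw [heq]

lemma eta_mono {U : Type*} [Fintype U] (C D : Setoid U) (α : ℝ)
    (P Q : Setoid U) (h : Refines P Q) :
    eta C D α Q ≤ eta C D α P := by
  unfold eta
  gcongr with q _
  · exact Set.toFinite _
  · intro x hx
    exact fun y hy => hx ((h x) hy)

lemma eta_le_one {U : Type*} [Fintype U] [Nonempty U] (C D : Setoid U) (α : ℝ)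
    (R : Setoid U) : eta C D α R ≤ 1 := by
  unfold eta
  haveI : Nonempty (Quotient D) := Nonempty.map (Quotient.mk D) ‹_›
  rw [div_le_one (by positivity)]
  have step : ∀ q : Quotient D,
      ((lowerApprox R (aprLow C α {x | Quotient.mk D x = q})).ncard : ℝ)
        ≤ (Fintype.card U : ℝ) := by
    intro q
    have hle : (lowerApprox R (aprLow C α {x | Quotient.mk D x = q})).ncard ≤
        (Set.univ : Set U).ncard :=
      Set.ncard_le_ncard (Set.subset_univ _) Set.finite_univ
    rw [Set.ncard_univ, Nat.card_eq_fintype_card] at hle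
    exact_mod_cast hle
  refine le_trans (Finset.sum_le_sum fun q _ => step q) ?_
  rw [Finset.sum_const, nsmul_eq_mul]
  exact le_of_eq (mul_comm _ _)

theorem Geta_antitone_of_refines {U : Type*} [Fintype U] [Nonempty U]
    (m : Set U → ℝ) (hm : IsGranularityMeasure m)
    (C D : Setoid U) (α : ℝ) (hα0 : 0 < α) (hα1 : α ≤ 1)
    (P Q : Setoid U) (h : Refines P Q) :
    Geta m C D α Q ≤ Geta m C D α P := by
  unfold Geta
  apply sub_le_sub_left
  have h1 : eta C D α Q ≤ eta C D α P := eta_mono C D α P Q h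
  have h2 : eta C D α Q ≤ 1 := eta_le_one C D α Q
  have h3 : 0 ≤ EG m (partitionOf P) := EG_nonneg m hm _
  have h4 : EG m (partitionOf P) ≤ EG m (partitionOf Q) := EG_mono m hm P Q h
  calc (1 - eta C D α P) * EG m (partitionOf P)
      ≤ (1 - eta C D α Q) * EG m (partitionOf P) :=
        mul_le_mul_of_nonneg_right (by linarith) h3
    _ ≤ (1 - eta C D α Q) * EG m (partitionOf Q) :=
        mul_le_mul_of_nonneg_left h4 (by linarith)
end
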